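/- arXiv:math/0501102 — 4 statements merged into one kernel-verified Lean document; each statement's English description precedes it below -/
import Mathlib

section
/- Let p(x_1, …, x_n) be a Laurent polynomial over ℂ in x_1, x_1^{−1}, …, x_n, x_n^{−1}, fix i with 1 ≤ i ≤ n, and let Op := id + Δ_{k_i} ∘ p(E_{k_1}, …, E_{k_n}) be the corresponding operator on ℂ[k_1, …, k_n]. Then Op is bijective, its inverse is given on each polynomial G by Op^{−1} G = ∑_{l=0}^{∞} (−1)^l Δ_{k_i}^l p(E_{k_1}, …, E_{k_n})^l G (a sum with only finitely many nonzero terms, with the l = 0 term equal to G), and moreover deg_{k_i} G = deg_{k_i} (Op G) = deg_{k_i} (Op^{−1} G) for every polynomial G, where deg_{k_i} denotes the degree in the variable k_i. -/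
open MvPolynomial Finset

/-- The shift of a polynomial by an integer vector `a`:
`(shiftPolyC a p)(x₁,…,xₙ) = p(x₁ + a₁, …, xₙ + aₙ)`. -/
noncomputable def shiftPolyC {n : ℕ} (a : Fin n → ℤ) (p : MvPolynomial (Fin n) ℂ) :
    MvPolynomial (Fin n) ℂ :=
  aeval (fun j => X j + C ((a j : ℂ))) p

/-- A Laurent polynomial `Q` in the commuting shift operators `E₁,…,Eₙ` (an element of the
group algebra `ℂ[ℤⁿ]`, the exponent vector recording the shift) acts on polynomials. -/
noncomputable def opApplyC {n : ℕ} (Q : AddMonoidAlgebra ℂ (Fin n → ℤ))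
    (p : MvPolynomial (Fin n) ℂ) : MvPolynomial (Fin n) ℂ :=
  Q.coeff.sum fun a c => c • shiftPolyC a p

/-- The shift operator `E_{k_i}` as an element of the operator algebra. -/
noncomputable def EshC {n : ℕ} (i : Fin n) : AddMonoidAlgebra ℂ (Fin n → ℤ) :=
  AddMonoidAlgebra.single (Pi.single i 1) 1

/-- The inverse shift operator `E_{k_i}⁻¹`. -/
noncomputable def EshInvC {n : ℕ} (i : Fin n) : AddMonoidAlgebra ℂ (Fin n → ℤ) :=
  AddMonoidAlgebra.single (Pi.single i (-1)) 1

/-- The difference operator `Δ_{k_i} = E_{k_i} - id`. -/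
noncomputable def DltC {n : ℕ} (i : Fin n) : AddMonoidAlgebra ℂ (Fin n → ℤ) :=
  EshC i - 1

/-!
Filter polynomials by their degree in `k_i`. Every shift `E^a` preserves each step of the
filtration and `Δ_{k_i}` lowers it by one, so `T := Δ_{k_i} p(E)` is locally nilpotent:
`T^(d+1) G = 0` as soon as `deg_{k_i} G ≤ d`. Hence on each polynomial the geometric series
`∑ (-T)^l` is a finite sum and a two-sided inverse of `1 + T`; and `(1 + T) G = G + T G` has the
degree of `G`, because `T G` has smaller degree.
-/

namespace MvPolynomial

variable {σ R : Type*}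

section DegreeOfLT

variable (R) [CommSemiring R]

/-- Unlike `{G | degreeOf i G < d}`, this contains `0` also for `d = 0` (`degreeOf i 0 = 0`). -/
noncomputable def degreeOfLT (i : σ) (d : ℕ) : Submodule R (MvPolynomial σ R) :=
  restrictSupport R {m | m i < d}

variable {R} {i : σ} {d e : ℕ} {G H : MvPolynomial σ R}

theorem mem_degreeOfLT : G ∈ degreeOfLT R i d ↔ ∀ m ∈ G.support, m i < d := by
  simp [degreeOfLT, mem_restrictSupport_iff, Set.subset_def]

theorem degreeOfLT_mono : Monotone (degreeOfLT R i) := fun _ _ h =>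
  restrictSupport_mono R fun _ hm => lt_of_lt_of_le hm h

theorem degreeOfLT_zero : degreeOfLT R i 0 = ⊥ :=
  eq_bot_iff.2 fun G hG => by
    simpa [mem_degreeOfLT, ← support_eq_empty, Finset.eq_empty_iff_forall_notMem] using hG

theorem mem_degreeOfLT_succ_iff : G ∈ degreeOfLT R i (d + 1) ↔ degreeOf i G ≤ d := by
  simp only [mem_degreeOfLT, degreeOf_le_iff, Nat.lt_succ_iff]

theorem mem_degreeOfLT_degreeOf_add_one (G : MvPolynomial σ R) :
    G ∈ degreeOfLT R i (degreeOf i G + 1) :=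
  mem_degreeOfLT_succ_iff.2 le_rfl

theorem degreeOf_add_of_mem_degreeOfLT (hH : H ∈ degreeOfLT R i (degreeOf i G)) :
    degreeOf i (G + H) = degreeOf i G := by
  obtain h | h := Nat.eq_zero_or_pos (degreeOf i G)
  · rw [h, degreeOfLT_zero, Submodule.mem_bot] at hH
    rw [hH, add_zero]
  · exact degreeOf_add_eq_of_degreeOf_lt ((degreeOf_lt_iff h).2 (mem_degreeOfLT.1 hH))

theorem map_mem_degreeOfLT_of_monomial (L : MvPolynomial σ R →ₗ[R] MvPolynomial σ R)
    (hL : ∀ m c, m i < d → L (monomial m c) ∈ degreeOfLT R i e)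
    (hG : G ∈ degreeOfLT R i d) : L G ∈ degreeOfLT R i e := by
  rw [G.as_sum, map_sum]
  exact Submodule.sum_mem _ fun m hm => hL m _ (mem_degreeOfLT.1 hG m hm)

end DegreeOfLT

section Shift

variable [CommSemiring R] {i : σ} {d : ℕ} {G : MvPolynomial σ R}

theorem degreeOf_X_add_C_pow_le (i j : σ) (b : R) (e : ℕ) :
    degreeOf i ((X j + C b) ^ e) ≤ Finsupp.single j e i := by
  have hX : degreeOf i (X j : MvPolynomial σ R) ≤ Finsupp.single j 1 i :=
    degreeOf_le_iff.2 fun m hm => by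
      rw [Finset.mem_singleton.1 (support_monomial_subset (R := R) hm)]
  calc _ ≤ e * degreeOf i (X j + C b) := degreeOf_pow_le ..
    _ ≤ e * Finsupp.single j 1 i := by
        gcongr
        exact (degreeOf_add_le ..).trans (max_le hX (by rw [degreeOf_C]; exact Nat.zero_le _))
    _ = Finsupp.single j e i := by
        rcases eq_or_ne j i with rfl | h
        · simp
        · simp [Finsupp.single_eq_of_ne h.symm]

theorem degreeOf_aeval_X_add_C_monomial_le (a : σ → R) (m : σ →₀ ℕ) (c : R) :
    degreeOf i (aeval (fun j => X j + C (a j)) (monomial m c)) ≤ m i := by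
  rw [aeval_monomial, Finsupp.prod]
  calc _ ≤ degreeOf i (algebraMap R (MvPolynomial σ R) c) +
        ∑ j ∈ m.support, degreeOf i ((X j + C (a j)) ^ m j) :=
        (degreeOf_mul_le ..).trans (add_le_add_right (degreeOf_prod_le ..) _)
    _ ≤ 0 + ∑ j ∈ m.support, Finsupp.single j (m j) i :=
        add_le_add (degreeOf_C c i).le (sum_le_sum fun j _ => degreeOf_X_add_C_pow_le i j _ _)
    _ = m i := by
        rw [zero_add, ← Finsupp.finsetSum_apply]
        exact DFunLike.congr_fun (Finsupp.sum_single m) i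

theorem aeval_X_add_C_mem_degreeOfLT (a : σ → R) (hG : G ∈ degreeOfLT R i d) :
    aeval (fun j => X j + C (a j)) G ∈ degreeOfLT R i d := by
  refine map_mem_degreeOfLT_of_monomial (aeval fun j => X j + C (a j)).toLinearMap
    (fun m c hm => ?_) hG
  exact degreeOfLT_mono (Nat.succ_le_of_lt hm)
    (mem_degreeOfLT_succ_iff.2 (degreeOf_aeval_X_add_C_monomial_le a m c))

end Shift

section Difference

variable [CommRing R] {i : σ} {d : ℕ} {G : MvPolynomial σ R}

theorem monomial_mem_degreeOfLT {m : σ →₀ ℕ} (c : R) (hm : m i < d) :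
    monomial m c ∈ degreeOfLT R i d :=
  mem_degreeOfLT.2 fun _ h => Finset.mem_singleton.1 (support_monomial_subset h) ▸ hm

theorem mul_mem_degreeOfLT_of_mem_one {H : MvPolynomial σ R} (hG : G ∈ degreeOfLT R i 1)
    (hH : H ∈ degreeOfLT R i d) : G * H ∈ degreeOfLT R i d := by
  have := Submodule.mul_mem_mul hG hH
  rw [degreeOfLT, degreeOfLT, ← restrictSupport_add] at this
  refine restrictSupport_mono R ?_ this
  rintro _ ⟨m₁, hm₁, m₂, hm₂, rfl⟩
  simp only [Set.mem_ofPred_eq, Finsupp.add_apply] at hm₁ hm₂ ⊢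
  omega

theorem X_add_C_pow_sub_X_pow_mem_degreeOfLT (i : σ) (b : R) (k : ℕ) :
    (X i + C b) ^ k - X i ^ k ∈ degreeOfLT R i k := by
  rw [add_pow, sum_range_succ, Nat.choose_self, Nat.sub_self, pow_zero, Nat.cast_one, mul_one,
    mul_one, add_sub_cancel_right]
  refine Submodule.sum_mem _ fun t ht => ?_
  rw [← map_pow, ← map_natCast C, mul_assoc, ← map_mul, mul_comm, C_mul_X_pow_eq_monomial]
  exact monomial_mem_degreeOfLT _ (by simpa using ht)

theorem aeval_X_add_C_monomial_sub_mem_degreeOfLT {a : σ → R} (ha : ∀ j ≠ i, a j = 0)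
    (m : σ →₀ ℕ) (c : R) :
    aeval (fun j => X j + C (a j)) (monomial m c) - monomial m c ∈ degreeOfLT R i (m i) := by
  have hsplit : monomial m c = monomial (m.erase i) c * X i ^ m i := by
    rw [X_pow_eq_monomial, monomial_mul, mul_one, Finsupp.erase_add_single]
  have hfix :
      aeval (fun j => X j + C (a j)) (monomial (m.erase i) c) = monomial (m.erase i) c := by
    rw [aeval_monomial, monomial_eq, algebraMap_eq]
    congr 1
    refine Finsupp.prod_congr fun j hj => ?_
    rw [ha j fun h => Finsupp.mem_support_iff.1 hj (h ▸ Finsupp.erase_same), C_0, add_zero]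
  rw [hsplit, map_mul, hfix, map_pow, aeval_X, ← mul_sub]
  exact mul_mem_degreeOfLT_of_mem_one (monomial_mem_degreeOfLT c (by simp))
    (X_add_C_pow_sub_X_pow_mem_degreeOfLT i _ _)

theorem aeval_X_add_C_sub_self_mem_degreeOfLT {a : σ → R} (ha : ∀ j ≠ i, a j = 0)
    (hG : G ∈ degreeOfLT R i (d + 1)) :
    aeval (fun j => X j + C (a j)) G - G ∈ degreeOfLT R i d := by
  have key := map_mem_degreeOfLT_of_monomial
    ((aeval fun j => X j + C (a j)).toLinearMap - LinearMap.id) (fun m c hm => by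
      rw [LinearMap.sub_apply, AlgHom.toLinearMap_apply, LinearMap.id_apply]
      exact degreeOfLT_mono (Nat.lt_succ_iff.1 hm)
        (aeval_X_add_C_monomial_sub_mem_degreeOfLT ha m c)) hG
  rwa [LinearMap.sub_apply, AlgHom.toLinearMap_apply, LinearMap.id_apply] at key

end Difference

section ShiftOperators

theorem aeval_X_add_C_comp [CommSemiring R] (a b : σ → R) :
    (aeval fun j => X j + C (a j)).comp (aeval fun j => X j + C (b j)) =
      aeval fun j => (X j + C (a j + b j) : MvPolynomial σ R) := by
  rw [comp_aeval]
  congr 1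
  funext j
  simp [add_assoc]

variable (σ R) [CommRing R]

noncomputable def shiftHom : Multiplicative (σ → ℤ) →* Module.End R (MvPolynomial σ R) where
  toFun a := (aeval fun j => X j + C ((a.toAdd j : ℤ) : R)).toLinearMap
  map_one' := LinearMap.ext fun G => by simp
  map_mul' a b := LinearMap.ext fun G => by
    simpa using (DFunLike.congr_fun (aeval_X_add_C_comp (fun j => ((a.toAdd j : ℤ) : R))
      (fun j => ((b.toAdd j : ℤ) : R))) G).symm

noncomputable def shiftAlgHom :
    AddMonoidAlgebra R (σ → ℤ) →ₐ[R] Module.End R (MvPolynomial σ R) :=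
  AddMonoidAlgebra.lift R _ (σ → ℤ) (shiftHom σ R)

variable {σ R} {i : σ} {d : ℕ} {G : MvPolynomial σ R}

theorem shiftAlgHom_apply (Q : AddMonoidAlgebra R (σ → ℤ)) (G : MvPolynomial σ R) :
    shiftAlgHom σ R Q G =
      Q.coeff.sum fun a c => c • aeval (fun j => X j + C ((a j : ℤ) : R)) G := by
  rw [shiftAlgHom, AddMonoidAlgebra.lift_apply]
  simp only [Finsupp.sum, LinearMap.coe_sum, Finset.sum_apply, LinearMap.smul_apply]
  rfl

theorem shiftAlgHom_mem_degreeOfLT (Q : AddMonoidAlgebra R (σ → ℤ))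
    (hG : G ∈ degreeOfLT R i d) : shiftAlgHom σ R Q G ∈ degreeOfLT R i d := by
  rw [shiftAlgHom_apply]
  exact Submodule.sum_mem _ fun a _ =>
    Submodule.smul_mem _ _ (aeval_X_add_C_mem_degreeOfLT (fun j => ((a j : ℤ) : R)) hG)

end ShiftOperators

end MvPolynomial

namespace Module.End

variable {R M : Type*} [Ring R] [AddCommGroup M] [Module R M] {f : Module.End R M} {x : M}
  {N : ℕ}

theorem neg_pow_apply_eq_zero (hx : (f ^ N) x = 0) : ((-f) ^ N) x = 0 := by
  rw [neg_pow, mul_apply, hx, map_zero]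

theorem one_add_apply_sum_neg_pow_apply (hx : (f ^ N) x = 0) :
    (1 + f : Module.End R M) (∑ l ∈ range N, ((-f) ^ l) x) = x := by
  rw [← LinearMap.sum_apply, ← mul_apply, ← sub_neg_eq_add, mul_neg_geom_sum,
    LinearMap.sub_apply, neg_pow_apply_eq_zero hx, sub_zero, one_apply]

theorem sum_neg_pow_apply_one_add_apply (hx : (f ^ N) x = 0) :
    ∑ l ∈ range N, ((-f) ^ l) ((1 + f : Module.End R M) x) = x := by
  rw [← LinearMap.sum_apply, ← mul_apply, ← sub_neg_eq_add, geom_sum_mul_neg,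
    LinearMap.sub_apply, neg_pow_apply_eq_zero hx, sub_zero, one_apply]

theorem bijective_one_add_of_forall_exists_pow_apply_eq_zero (hf : ∀ x, ∃ N, (f ^ N) x = 0) :
    Function.Bijective (1 + f : Module.End R M) := by
  refine ⟨(injective_iff_map_eq_zero _).2 fun x hx => ?_, fun x => ?_⟩
  · obtain ⟨N, hN⟩ := hf x
    rw [← sum_neg_pow_apply_one_add_apply hN, hx]
    simp only [map_zero, sum_const_zero]
  · obtain ⟨N, hN⟩ := hf x
    exact ⟨_, one_add_apply_sum_neg_pow_apply hN⟩

end Module.End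

section DifferenceOperator

variable {n : ℕ} {i : Fin n} {d : ℕ} {G : MvPolynomial (Fin n) ℂ}

theorem opApplyC_eq_shiftAlgHom (Q : AddMonoidAlgebra ℂ (Fin n → ℤ)) :
    opApplyC Q = shiftAlgHom (Fin n) ℂ Q :=
  funext fun G => (shiftAlgHom_apply Q G).symm

theorem shiftAlgHom_dltC_apply (i : Fin n) (G : MvPolynomial (Fin n) ℂ) :
    shiftAlgHom (Fin n) ℂ (DltC i) G = shiftPolyC (Pi.single i 1) G - G := by
  rw [DltC, EshC, map_sub, map_one, shiftAlgHom, AddMonoidAlgebra.lift_single, one_smul]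
  rfl

theorem shiftAlgHom_dltC_mul_mem_degreeOfLT (Q : AddMonoidAlgebra ℂ (Fin n → ℤ))
    (hG : G ∈ degreeOfLT ℂ i (d + 1)) :
    shiftAlgHom (Fin n) ℂ (DltC i * Q) G ∈ degreeOfLT ℂ i d := by
  rw [map_mul, Module.End.mul_apply, shiftAlgHom_dltC_apply]
  exact aeval_X_add_C_sub_self_mem_degreeOfLT
    (a := fun j => (((Pi.single i 1 : Fin n → ℤ) j : ℤ) : ℂ)) (fun j hj => by simp [hj])
    (shiftAlgHom_mem_degreeOfLT Q hG)

theorem shiftAlgHom_dltC_mul_pow_apply_eq_zero (Q : AddMonoidAlgebra ℂ (Fin n → ℤ))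
    (hG : G ∈ degreeOfLT ℂ i d) : shiftAlgHom (Fin n) ℂ ((DltC i * Q) ^ d) G = 0 := by
  induction d generalizing G with
  | zero =>
    rw [degreeOfLT_zero, Submodule.mem_bot] at hG
    rw [hG, map_zero]
  | succ d ih =>
    rw [pow_succ, map_mul, Module.End.mul_apply, ih (shiftAlgHom_dltC_mul_mem_degreeOfLT Q hG)]

theorem degreeOf_shiftAlgHom_one_add_dltC_mul_apply (Q : AddMonoidAlgebra ℂ (Fin n → ℤ))
    (G : MvPolynomial (Fin n) ℂ) :
    degreeOf i (shiftAlgHom (Fin n) ℂ (1 + DltC i * Q) G) = degreeOf i G := by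
  rw [map_add, map_one, LinearMap.add_apply, Module.End.one_apply]
  exact degreeOf_add_of_mem_degreeOfLT
    (shiftAlgHom_dltC_mul_mem_degreeOfLT Q (mem_degreeOfLT_degreeOf_add_one G))

end DifferenceOperator

/-- `Op := id + Δ_{k_i} p(E_{k_1},…,E_{k_n})` is bijective on `ℂ[k₁,…,k_n]`; its inverse is
given by the (finite on each polynomial) series `∑_{l≥0} (-1)^l Δ_{k_i}^l p(E)^l`, whose
`l = 0` term is the identity; and `Op` and `Op⁻¹` preserve the degree in `k_i`. -/
theorem op_invertible (n : ℕ) (p : AddMonoidAlgebra ℂ (Fin n → ℤ)) (i : Fin n) :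
    Function.Bijective (opApplyC (1 + DltC i * p)) ∧
    (∀ G : MvPolynomial (Fin n) ℂ, ∃ N : ℕ,
      (∀ l : ℕ, N ≤ l → opApplyC ((-(DltC i * p)) ^ l) G = 0) ∧
      opApplyC ((-(DltC i * p)) ^ 0) G = G ∧
      opApplyC (1 + DltC i * p)
        (∑ l ∈ Finset.range N, opApplyC ((-(DltC i * p)) ^ l) G) = G) ∧
    (∀ G : MvPolynomial (Fin n) ℂ,
      degreeOf i (opApplyC (1 + DltC i * p) G) = degreeOf i G) ∧
    (∀ G : MvPolynomial (Fin n) ℂ,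
      degreeOf i (Function.invFun (opApplyC (1 + DltC i * p)) G) = degreeOf i G) := by
  have hdeg := degreeOf_shiftAlgHom_one_add_dltC_mul_apply (i := i) p
  simp only [opApplyC_eq_shiftAlgHom, map_add, map_one, map_neg, map_pow] at hdeg ⊢
  set T := shiftAlgHom (Fin n) ℂ (DltC i * p)
  have hT : ∀ G l, degreeOf i G < l → (T ^ l) G = 0 := fun G l hl => by
    rw [← map_pow]
    exact shiftAlgHom_dltC_mul_pow_apply_eq_zero p
      (degreeOfLT_mono hl (mem_degreeOfLT_degreeOf_add_one G))
  have hbij := Module.End.bijective_one_add_of_forall_exists_pow_apply_eq_zero fun G =>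
    ⟨_, hT G _ (Nat.lt_succ_self _)⟩
  refine ⟨hbij, fun G => ⟨degreeOf i G + 1, fun l hl => ?_, by simp,
    Module.End.one_add_apply_sum_neg_pow_apply (hT G _ (Nat.lt_succ_self _))⟩, hdeg,
    fun G => ?_⟩
  · exact Module.End.neg_pow_apply_eq_zero (hT G l hl)
  · obtain ⟨H, rfl⟩ := hbij.2 G
    rw [Function.leftInverse_invFun hbij.1 H, hdeg]
end

section
/- Let h : ℤ² → ℂ be any function and define g(k_1, k_2, k_3) := ∑^{(k_1,k_2,k_3)}_{(l_1,l_2)} h(l_1, l_2). Then for all integers k_1, k_2, k_3: (T'_{1,2} g)(k_1, k_2, k_3) = −(1/2) ∑_{l_1=k_1}^{k_2−1} ∑_{l_2=k_1}^{k_2−1} (T'_{1,2} h)(l_1, l_2), where T'_{1,2} acts on the first two arguments and all sums are extended sums. -/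
open MvPolynomial Finset

/-- The extended sum `∑_{x=a}^{b} f(x)`: the usual sum if `a ≤ b`, zero if `b = a - 1`,
and `-(f(b+1) + ⋯ + f(a-1))` if `b + 1 ≤ a - 1`. -/
noncomputable def extSum (f : ℤ → ℂ) (a b : ℤ) : ℂ :=
  if a ≤ b then ∑ x ∈ Finset.Icc a b, f x else -∑ x ∈ Finset.Icc (b + 1) (a - 1), f x

/-- The shift operator `E_i` on functions `ℤⁿ → ℂ`. -/
def Efun {n : ℕ} (i : Fin n) (f : (Fin n → ℤ) → ℂ) : (Fin n → ℤ) → ℂ :=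
  fun x => f (Function.update x i (x i + 1))

/-- The difference operator `Δ_i = E_i - id` on functions `ℤⁿ → ℂ`. -/
noncomputable def Dfun {n : ℕ} (i : Fin n) (f : (Fin n → ℤ) → ℂ) : (Fin n → ℤ) → ℂ :=
  fun x => Efun i f x - f x

/-- The operator `S_{i,j}` exchanging the `i`-th and `j`-th arguments. -/
def Sfun {n : ℕ} (i j : Fin n) (f : (Fin n → ℤ) → ℂ) : (Fin n → ℤ) → ℂ :=
  fun x => f (x ∘ Equiv.swap i j)

/-- The operator `T'_{i,j} = (id + S_{i,j})(id + E_j Δ_i)` on functions `ℤⁿ → ℂ`. -/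
noncomputable def Tfun {n : ℕ} (i j : Fin n) (f : (Fin n → ℤ) → ℂ) : (Fin n → ℤ) → ℂ :=
  fun x => (f x + Efun j (Dfun i f) x) + Sfun i j (fun y => f y + Efun j (Dfun i f) y) x

/-- The recursively defined summation operator `∑^{(k₁,…,k_n)}_{(l₁,…,l_{n-1})}` (here with
`n = m + 2` bottom entries and `m + 1` summation variables):
for `n = 2` it is the extended sum `∑_{l₁=k₁}^{k₂}`, and for `n > 2` it is
`∑^{(k₁,…,k_{n-1})}_{(l₁,…,l_{n-2})} ∑_{l_{n-1}=k_{n-1}+1}^{k_n} A(l₁,…,l_{n-1})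
 + ∑^{(k₁,…,k_{n-1}-1)}_{(l₁,…,l_{n-2})} A(l₁,…,l_{n-2},k_{n-1})`. -/
noncomputable def sumOp : (m : ℕ) → (Fin (m + 2) → ℤ) → ((Fin (m + 1) → ℤ) → ℂ) → ℂ
  | 0, k, A => extSum (fun l => A fun _ => l) (k 0) (k 1)
  | m + 1, k, A =>
      sumOp m (Fin.init k)
        (fun l => extSum (fun t => A (Fin.snoc l t))
          (k ⟨m + 1, by omega⟩ + 1) (k ⟨m + 2, by omega⟩)) +
      sumOp m (Function.update (Fin.init k) (Fin.last (m + 1)) (k ⟨m + 1, by omega⟩ - 1))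
        (fun l => A (Fin.snoc l (k ⟨m + 1, by omega⟩)))



lemma extSum_congr {f g : ℤ → ℂ} (a b : ℤ) (hfg : ∀ x, f x = g x) :
    extSum f a b = extSum g a b :=
  congrArg (fun f => extSum f a b) (funext hfg)

lemma extSum_add (f g : ℤ → ℂ) (a b : ℤ) :
    extSum (fun x => f x + g x) a b = extSum f a b + extSum g a b := by
  unfold extSum; split_ifs <;> simp [Finset.sum_add_distrib] <;> ring

lemma extSum_sub (f g : ℤ → ℂ) (a b : ℤ) :
    extSum (fun x => f x - g x) a b = extSum f a b - extSum g a b := by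
  unfold extSum; split_ifs <;> simp [Finset.sum_sub_distrib] <;> ring

lemma extSum_single (f : ℤ → ℂ) (a : ℤ) : extSum f a a = f a := by
  simp [extSum]

lemma extSum_succ_top (f : ℤ → ℂ) (a b : ℤ) :
    extSum f a (b + 1) = extSum f a b + f (b + 1) := by
  unfold extSum
  rcases lt_trichotomy a (b + 1) with h | h | h
  · rw [if_pos (by omega), if_pos (by omega),
      show Finset.Icc a (b+1) = insert (b+1) (Finset.Icc a b) by ext x; simp; omega,
      Finset.sum_insert (by simp)]
    ring
  · rw [if_pos (by omega), if_neg (by omega), show a = b + 1 from h]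
    simp
  · rw [if_neg (by omega), if_neg (by omega),
      show Finset.Icc (b+1) (a-1) = insert (b+1) (Finset.Icc (b+1+1) (a-1)) by ext x; simp; omega,
      Finset.sum_insert (by simp)]
    ring_nf

lemma extSum_chasles (f : ℤ → ℂ) (a b c : ℤ) :
    extSum f a c = extSum f a b + extSum f (b + 1) c := by
  refine Int.inductionOn' c b ?_ ?_ ?_
  · have : extSum f (b+1) b = 0 := by unfold extSum; rw [if_neg (by omega)]; simp
    rw [this]; ring
  · intro k _ ih
    rw [extSum_succ_top, extSum_succ_top f (b+1), ih]; ring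
  · intro k _ ih
    have h1 := extSum_succ_top f a (k - 1)
    have h2 := extSum_succ_top f (b+1) (k - 1)
    simp only [sub_add_cancel] at h1 h2
    have e1 : extSum f a (k-1) = extSum f a k - f k := by rw [h1]; ring
    have e2 : extSum f (b+1) (k-1) = extSum f (b+1) k - f k := by rw [h2]; ring
    rw [e1, e2, ih]; ring

lemma extSum_split (f : ℤ → ℂ) (a b : ℤ) :
    extSum f a b = extSum f 0 b - extSum f 0 (a - 1) := by
  have := extSum_chasles f 0 (a - 1) b
  rw [sub_add_cancel] at this
  rw [this]; ring

lemma extSum_shift (f : ℤ → ℂ) (a b : ℤ) :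
    extSum (fun x => f (x + 1)) a b = extSum f (a + 1) (b + 1) := by
  unfold extSum
  have key : ∀ u v : ℤ, ∑ x ∈ Finset.Icc u v, f (x + 1) = ∑ x ∈ Finset.Icc (u+1) (v+1), f x := by
    intro u v
    rw [show Finset.Icc (u+1) (v+1) = Finset.map (addRightEmbedding 1) (Finset.Icc u v) by
      rw [Finset.map_add_right_Icc], Finset.sum_map]
    rfl
  split_ifs with h1 h2 h2 <;> [skip; omega; omega; skip] <;> rw [key] <;> ring_nf

lemma extSum_comm (h : ℤ → ℤ → ℂ) (a b c d : ℤ) :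
    extSum (fun x => extSum (fun y => h x y) c d) a b =
    extSum (fun y => extSum (fun x => h x y) a b) c d := by
  unfold extSum
  split_ifs with h1 h2 h2 <;>
    simp only [h2, if_true, if_false, Finset.sum_neg_distrib, neg_neg] <;>
    rw [Finset.sum_comm]

/-- formal double antiderivative -/
noncomputable def Qf (h : ℤ → ℤ → ℂ) (x y : ℤ) : ℂ :=
  extSum (fun l1 => extSum (fun l2 => h l1 l2) 0 y) 0 x

lemma dd (h : ℤ → ℤ → ℂ) (a b c d : ℤ) :
    extSum (fun l1 => extSum (fun l2 => h l1 l2) c d) a b =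
      Qf h b d - Qf h b (c-1) - Qf h (a-1) d + Qf h (a-1) (c-1) := by
  rw [extSum_congr a b (fun l1 => extSum_split (fun l2 => h l1 l2) c d),
    extSum_sub, extSum_split, extSum_split (fun l1 => extSum (fun l2 => h l1 l2) 0 (c-1))]
  unfold Qf; ring

lemma rowq (h : ℤ → ℤ → ℂ) (a b c : ℤ) :
    extSum (fun l1 => h l1 c) a b =
      Qf h b c - Qf h b (c-1) - Qf h (a-1) c + Qf h (a-1) (c-1) := by
  rw [← dd h a b c c]
  exact extSum_congr a b fun l1 => (extSum_single (fun l2 => h l1 l2) c).symm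

lemma pointq (h : ℤ → ℤ → ℂ) (a b : ℤ) :
    h a b = Qf h a b - Qf h (a-1) b - Qf h a (b-1) + Qf h (a-1) (b-1) := by
  have := rowq h a a b
  rw [extSum_single] at this
  rw [this]; ring

lemma Qf_swap (h : ℤ → ℤ → ℂ) (x y : ℤ) :
    Qf (fun a b => h b a) x y = Qf h y x :=
  extSum_comm (fun a b => h b a) 0 x 0 y

lemma sumOp_one (h : ℤ → ℤ → ℂ) (k : Fin 3 → ℤ) :
    sumOp 1 k (fun l => h (l 0) (l 1)) =
      extSum (fun l1 => extSum (fun l2 => h l1 l2) (k 1 + 1) (k 2)) (k 0) (k 1)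
      + extSum (fun l1 => h l1 (k 1)) (k 0) (k 1 - 1) := by
  simp [sumOp, Fin.init, Fin.snoc, Function.update, Fin.last]


lemma O1 (h : ℤ → ℤ → ℂ) (a b : ℤ) :
    extSum (fun l1 => extSum (fun l2 => h l1 l2) a b) a b =
      Qf h b b - Qf h b (a-1) - Qf h (a-1) b + Qf h (a-1) (a-1) := dd h a b a b

lemma O2 (h : ℤ → ℤ → ℂ) (a b : ℤ) :
    extSum (fun l1 => extSum (fun l2 => h (l1+1) (l2+1)) a b) a b =
      Qf h (b+1) (b+1) - Qf h (b+1) a - Qf h a (b+1) + Qf h a a := by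
  rw [extSum_congr a b (fun l1 => extSum_shift (h (l1+1)) a b),
    extSum_shift (fun l1 => extSum (h l1) (a+1) (b+1)) a b,
    dd h (a+1) (b+1) (a+1) (b+1)]
  ring_nf

lemma O3 (h : ℤ → ℤ → ℂ) (a b : ℤ) :
    extSum (fun l1 => extSum (fun l2 => h l1 (l2+1)) a b) a b =
      Qf h b (b+1) - Qf h b a - Qf h (a-1) (b+1) + Qf h (a-1) a := by
  rw [extSum_congr a b (fun l1 => extSum_shift (h l1) a b),
    dd h a b (a+1) (b+1)]
  ring_nf

lemma O4 (h : ℤ → ℤ → ℂ) (a b : ℤ) :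
    extSum (fun l1 => extSum (fun l2 => h l2 l1) a b) a b =
      Qf h b b - Qf h b (a-1) - Qf h (a-1) b + Qf h (a-1) (a-1) := by
  have := dd (fun p q => h q p) a b a b
  simp only [Qf_swap] at this
  rw [this]; ring

lemma O5 (h : ℤ → ℤ → ℂ) (a b : ℤ) :
    extSum (fun l1 => extSum (fun l2 => h (l2+1) (l1+1)) a b) a b =
      Qf h (b+1) (b+1) - Qf h (b+1) a - Qf h a (b+1) + Qf h a a := by
  have := O2 (fun p q => h q p) a b
  simp only [Qf_swap] at this
  rw [this]; ring

lemma O6 (h : ℤ → ℤ → ℂ) (a b : ℤ) :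
    extSum (fun l1 => extSum (fun l2 => h l2 (l1+1)) a b) a b =
      Qf h b (b+1) - Qf h b a - Qf h (a-1) (b+1) + Qf h (a-1) a := by
  have : ∀ l1, extSum (fun l2 => h l2 (l1+1)) a b
      = (fun t => extSum (fun l2 => h l2 t) a b) (l1 + 1) := fun l1 => rfl
  rw [extSum_congr a b this, extSum_shift (fun t => extSum (fun l2 => h l2 t) a b) a b]
  have := dd (fun p q => h q p) (a+1) (b+1) a b
  simp only [Qf_swap] at this
  rw [this]; ring

lemma rhs_eval (h : ℤ → ℤ → ℂ) (a b : ℤ) :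
    extSum (fun l1 => extSum (fun l2 =>
        h l1 l2 + (h (l1 + 1) (l2 + 1) - h l1 (l2 + 1)) +
          (h l2 l1 + (h (l2 + 1) (l1 + 1) - h l2 (l1 + 1)))) a b) a b =
      2 * ((Qf h b b - Qf h b (a-1) - Qf h (a-1) b + Qf h (a-1) (a-1))
        + (Qf h (b+1) (b+1) - Qf h (b+1) a - Qf h a (b+1) + Qf h a a)
        - (Qf h b (b+1) - Qf h b a - Qf h (a-1) (b+1) + Qf h (a-1) a)) := by
  have inner : ∀ l1, extSum (fun l2 =>
      h l1 l2 + (h (l1 + 1) (l2 + 1) - h l1 (l2 + 1)) +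
        (h l2 l1 + (h (l2 + 1) (l1 + 1) - h l2 (l1 + 1)))) a b
      = extSum (fun l2 => h l1 l2) a b
        + (extSum (fun l2 => h (l1+1) (l2+1)) a b - extSum (fun l2 => h l1 (l2+1)) a b)
        + (extSum (fun l2 => h l2 l1) a b
          + (extSum (fun l2 => h (l2+1) (l1+1)) a b - extSum (fun l2 => h l2 (l1+1)) a b)) := by
    intro l1
    rw [extSum_add, extSum_add, extSum_add, extSum_sub, extSum_sub]
  rw [extSum_congr a b inner, extSum_add, extSum_add, extSum_add, extSum_sub, extSum_sub,
    O1, O2, O3, O4, O5, O6]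
  ring

/-- Second formula of the fundamental lemma:
`T'_{1,2} (∑^{(k₁,k₂,k₃)}_{(l₁,l₂)} h) (k₁,k₂,k₃)
  = -(1/2) ∑_{l₁=k₁}^{k₂-1} ∑_{l₂=k₁}^{k₂-1} (T'_{1,2} h)(l₁,l₂)`. -/
theorem fundamental_lemma_two_rows (h : ℤ → ℤ → ℂ) (k1 k2 k3 : ℤ) :
    Tfun 0 1 (fun x : Fin 3 → ℤ => sumOp 1 x (fun l => h (l 0) (l 1))) ![k1, k2, k3] =
      -(1 / 2 : ℂ) *
        extSum (fun l1 => extSum (fun l2 =>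
          Tfun 0 1 (fun l : Fin 2 → ℤ => h (l 0) (l 1)) ![l1, l2]) k1 (k2 - 1)) k1 (k2 - 1) := by
  simp only [Tfun, Efun, Dfun, Sfun]
  simp only [sumOp_one]
  simp only [Function.comp, Function.update_apply, Equiv.swap_apply_def]
  norm_num [Matrix.cons_val_zero, Matrix.cons_val_one, Matrix.head_cons]
  rw [rhs_eval h k1 (k2 - 1)]
  simp only [show ((2:Fin 3) = 0) = False from by simp, show ((2:Fin 3) = 1) = False from by simp,
    if_false, Matrix.cons_val_two, Matrix.tail_cons, Matrix.head_cons]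
  simp only [dd, rowq]
  ring
end

section
/- Let A(k_1, …, k_n) be a polynomial over ℂ. Then (id + E_{k_{i+1}} Δ_{k_i}) A is antisymmetric in k_i and k_{i+1} for every i with 1 ≤ i ≤ n − 1 if and only if (∏_{1 ≤ p < q ≤ n} (id + E_{k_q} Δ_{k_p})) A is antisymmetric in all of the variables k_1, …, k_n (i.e., changes sign under every transposition of two variables). -/
open MvPolynomial Finset

/-- All pairs `(p, q)` with `p < q`. -/
def pairs (n : ℕ) : Finset (Fin n × Fin n) :=
  Finset.univ.filter fun p => p.1 < p.2

/-!
Write `T p q = 1 + E_q Δ_p`. For adjacent `i, j = i + 1` the product over all pairs is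
`R * T i j`, where `R` runs over the pairs other than `(i, j)`. Renaming by a permutation `σ`
turns `E_q` into `E_{σ q}`, and the transposition `(i j)` permutes the pairs `p < q` other than
`(i, j)`, so it commutes with `R`. Each `T p q` is injective on polynomials because `E_q Δ_p`
strictly lowers the total degree, hence so is `R`, and antisymmetry of `R (T i j A)` under `(i j)`
is equivalent to that of `T i j A`. Finally, adjacent transpositions generate the symmetric group,
so if `B = (∏ T p q) A` is antisymmetric under all of them, then `rename σ B = sign σ • B` for
every permutation `σ`.
-/

namespace MvPolynomial

variable {R σ τ : Type*} [CommRing R]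

noncomputable def shift (c : σ → R) : MvPolynomial σ R →ₐ[R] MvPolynomial σ R :=
  aeval fun j => X j + C (c j)

theorem shift_X (c : σ → R) (j : σ) : shift c (X j) = X j + C (c j) :=
  aeval_X _ _

theorem shift_shift (c d : σ → R) (f : MvPolynomial σ R) :
    shift c (shift d f) = shift (c + d) f := by
  rw [shift, shift, shift, ← AlgHom.comp_apply, comp_aeval]
  congr 2
  funext j
  simp only [map_add, aeval_X, aeval_C, algebraMap_eq, Pi.add_apply, add_assoc]

theorem shift_zero (f : MvPolynomial σ R) : shift 0 f = f := by
  simp [shift]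

theorem rename_shift (e : σ ≃ τ) (c : σ → R) (f : MvPolynomial σ R) :
    rename e (shift c f) = shift (c ∘ e.symm) (rename e f) := by
  rw [shift, shift, ← AlgHom.comp_apply, comp_aeval, aeval_rename]
  congr 2
  funext j
  simp

theorem degree_lt_of_mem_support_shift_monomial_sub_add {c : σ → R} {s t : σ →₀ ℕ}
    (hs : ∀ m ∈ (shift c (monomial s 1) - monomial s 1).support, m.degree < s.degree)
    (ht : ∀ m ∈ (shift c (monomial t 1) - monomial t 1).support, m.degree < t.degree) :
    ∀ m ∈ (shift c (monomial (s + t) 1) - monomial (s + t) 1).support,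
      m.degree < (s + t).degree := by
  classical
  have split : shift c (monomial (s + t) 1) - monomial (s + t) 1 =
      (shift c (monomial s 1) - monomial s 1) * shift c (monomial t 1) +
        monomial s 1 * (shift c (monomial t 1) - monomial t 1) := by
    rw [show monomial (s + t) (1 : R) = monomial s 1 * monomial t 1 by rw [monomial_mul, one_mul],
      map_mul]
    ring
  have hT : ∀ m ∈ (shift c (monomial t (1 : R))).support, m.degree ≤ t.degree := by
    intro m hm
    rw [← add_sub_cancel (monomial t (1 : R)) (shift c _)] at hm
    rcases Finset.mem_union.mp (support_add hm) with h | h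
    · rw [Finset.mem_singleton.mp (support_monomial_subset h)]
    · exact (ht m h).le
  rw [split]
  intro m hm
  obtain ⟨m₁, h₁, m₂, h₂, rfl⟩ | ⟨m₁, h₁, m₂, h₂, rfl⟩ :=
    (Finset.mem_union.mp (support_add hm)).imp (Finset.mem_add.mp <| support_mul _ _ ·)
      (Finset.mem_add.mp <| support_mul _ _ ·)
  · rw [map_add, map_add]; exact Nat.add_lt_add_of_lt_of_le (hs m₁ h₁) (hT m₂ h₂)
  · rw [map_add, map_add, Finset.mem_singleton.mp (support_monomial_subset h₁)]
    exact Nat.add_lt_add_left (ht m₂ h₂) _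

theorem degree_lt_of_mem_support_shift_monomial_sub (c : σ → R) (s : σ →₀ ℕ) :
    ∀ m ∈ (shift c (monomial s 1) - monomial s 1).support, m.degree < s.degree := by
  induction s using Finsupp.induction_linear with
  | zero => simp [← C_apply]
  | add s t hs ht => exact degree_lt_of_mem_support_shift_monomial_sub_add hs ht
  | single i k =>
    induction k with
    | zero => simp [← C_apply]
    | succ k ih =>
      refine Finsupp.single_add i k 1 ▸
        degree_lt_of_mem_support_shift_monomial_sub_add ih fun m hm => ?_
      rw [← X, shift_X, add_sub_cancel_left] at hm
      simp [Finset.mem_singleton.mp (support_monomial_subset hm)]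

theorem degree_lt_of_mem_support_shift_sub (c : σ → R) (f : MvPolynomial σ R) :
    ∀ m ∈ (shift c f - f).support, m.degree < f.totalDegree := by
  have hsum : shift c f - f =
      ∑ s ∈ f.support, coeff s f • (shift c (monomial s 1) - monomial s 1) := by
    conv_lhs => rw [f.as_sum, map_sum, ← Finset.sum_sub_distrib]
    refine Finset.sum_congr rfl fun s _ => ?_
    rw [smul_sub, ← map_smul, smul_monomial, smul_eq_mul, mul_one]
  have hmem : shift c f - f ∈ restrictSupport R {m | m.degree < f.totalDegree} := by
    rw [hsum]
    refine Submodule.sum_mem _ fun s hs => Submodule.smul_mem _ _ ?_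
    exact (mem_restrictSupport_iff R).mpr fun m hm =>
      (degree_lt_of_mem_support_shift_monomial_sub c s m hm).trans_le (le_totalDegree hs)
  exact (mem_restrictSupport_iff R).mp hmem

theorem totalDegree_shift_sub_lt {c : σ → R} {f : MvPolynomial σ R} (hf : shift c f ≠ f) :
    (shift c f - f).totalDegree < f.totalDegree := by
  obtain ⟨m, hm⟩ := support_nonempty.mpr (sub_ne_zero.mpr hf)
  have hpos := (degree_lt_of_mem_support_shift_sub c f m hm).trans_le' (Nat.zero_le _)
  exact (Finset.sup_lt_iff hpos).mpr (degree_lt_of_mem_support_shift_sub c f)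

theorem totalDegree_shift_le (c : σ → R) (f : MvPolynomial σ R) :
    (shift c f).totalDegree ≤ f.totalDegree := by
  rw [← add_sub_cancel f (shift c f)]
  refine (totalDegree_add _ _).trans (max_le le_rfl ?_)
  exact Finset.sup_le fun m hm => (degree_lt_of_mem_support_shift_sub c f m hm).le

theorem eq_zero_of_add_shift_shift_sub_eq_zero {c c' : σ → R} {f : MvPolynomial σ R}
    (h : f + shift c' (shift c f - f) = 0) : f = 0 := by
  by_cases hc : shift c f = f
  · rwa [hc, sub_self, map_zero, add_zero] at h
  · have hf : f = -shift c' (shift c f - f) := eq_neg_of_add_eq_zero_left h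
    refine absurd ?_ (lt_irrefl f.totalDegree)
    calc f.totalDegree = (shift c' (shift c f - f)).totalDegree := by
          rw [← totalDegree_neg (shift c' _), ← hf]
      _ ≤ (shift c f - f).totalDegree := totalDegree_shift_le _ _
      _ < f.totalDegree := totalDegree_shift_sub_lt hc

theorem rename_eq_sign_smul_of_rename_swap_eq_neg {n : ℕ}
    {B : MvPolynomial (Fin n) R}
    (h : ∀ i j : Fin n, (i : ℕ) + 1 = j → rename (Equiv.swap i j) B = -B)
    (σ : Equiv.Perm (Fin n)) : rename σ B = (Equiv.Perm.sign σ : ℤ) • B := by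
  obtain _ | m := n
  · simp [Subsingleton.elim σ 1]
  · have hσ :
        σ ∈ Submonoid.closure (Set.range fun k : Fin m => Equiv.swap k.castSucc k.succ) := by
      rw [Equiv.Perm.mclosure_swap_castSucc_succ]
      exact Submonoid.mem_top σ
    induction hσ using Submonoid.closure_induction with
    | mem τ hτ =>
      obtain ⟨k, rfl⟩ := hτ
      rw [Equiv.Perm.sign_swap Fin.castSucc_lt_succ.ne, h _ _ (by simp)]
      simp
    | one => simp
    | mul τ τ' _ _ hτ hτ' =>
      rw [Equiv.Perm.coe_mul, ← rename_rename, hτ', map_zsmul, hτ, smul_smul, map_mul,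
        Units.val_mul, mul_comm]

end MvPolynomial

section ShiftOperators

variable {n : ℕ}

noncomputable def shiftMonoidHom :
    Multiplicative (Fin n → ℤ) →* Module.End ℂ (MvPolynomial (Fin n) ℂ) where
  toFun a := (shift fun j => (Multiplicative.toAdd a j : ℂ)).toLinearMap
  map_one' := LinearMap.ext fun p => by
    simp only [toAdd_one, Pi.zero_apply, Int.cast_zero]
    exact shift_zero p
  map_mul' a b := LinearMap.ext fun p => by
    simp only [AlgHom.toLinearMap_apply, Module.End.mul_apply, shift_shift]
    congr 2
    ext; simp

noncomputable def opAlgHom :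
    AddMonoidAlgebra ℂ (Fin n → ℤ) →ₐ[ℂ] Module.End ℂ (MvPolynomial (Fin n) ℂ) :=
  AddMonoidAlgebra.lift ℂ _ _ shiftMonoidHom

theorem opApplyC_eq_opAlgHom (Q : AddMonoidAlgebra ℂ (Fin n → ℤ))
    (p : MvPolynomial (Fin n) ℂ) :
    opApplyC Q p = opAlgHom Q p := by
  rw [opAlgHom, AddMonoidAlgebra.lift_apply, opApplyC, Finsupp.sum, Finsupp.sum,
    LinearMap.coe_sum, Finset.sum_apply]
  rfl

theorem opApplyC_mul (Q Q' : AddMonoidAlgebra ℂ (Fin n → ℤ)) (p : MvPolynomial (Fin n) ℂ) :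
    opApplyC (Q * Q') p = opApplyC Q (opApplyC Q' p) := by
  simp only [opApplyC_eq_opAlgHom, map_mul, Module.End.mul_apply]

theorem opApplyC_neg (Q : AddMonoidAlgebra ℂ (Fin n → ℤ)) (p : MvPolynomial (Fin n) ℂ) :
    opApplyC Q (-p) = -opApplyC Q p := by
  simp only [opApplyC_eq_opAlgHom, map_neg]

theorem opApplyC_sub (Q : AddMonoidAlgebra ℂ (Fin n → ℤ)) (p p' : MvPolynomial (Fin n) ℂ) :
    opApplyC Q (p - p') = opApplyC Q p - opApplyC Q p' := by
  simp only [opApplyC_eq_opAlgHom, map_sub]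

theorem opApplyC_one_add_EshC_mul_DltC (i j : Fin n) (f : MvPolynomial (Fin n) ℂ) :
    opApplyC (1 + EshC j * DltC i) f =
      f + shiftPolyC (Pi.single j 1) (shiftPolyC (Pi.single i 1) f - f) := by
  simp only [opApplyC_eq_opAlgHom, opAlgHom, EshC, DltC, map_add, map_mul, map_sub, map_one,
    AddMonoidAlgebra.lift_single, one_smul]
  rfl

theorem opApplyC_one_add_EshC_mul_DltC_injective (i j : Fin n) :
    Function.Injective (opApplyC (1 + EshC j * DltC i)) := by
  intro f g hfg
  rw [← sub_eq_zero] at hfg ⊢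
  rw [← opApplyC_sub, opApplyC_one_add_EshC_mul_DltC] at hfg
  exact eq_zero_of_add_shift_shift_sub_eq_zero hfg

theorem opApplyC_prod_injective {ι : Type*} (s : Finset ι) (i j : ι → Fin n) :
    Function.Injective (opApplyC (∏ x ∈ s, (1 + EshC (j x) * DltC (i x)))) := by
  classical
  induction s using Finset.induction with
  | empty =>
    intro f g hfg
    simpa [opApplyC_eq_opAlgHom] using hfg
  | insert x s hx ih =>
    rw [Finset.prod_insert hx, funext (opApplyC_mul _ _)]
    exact (opApplyC_one_add_EshC_mul_DltC_injective _ _).comp ih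

end ShiftOperators

section Permutations

variable {n : ℕ}

noncomputable def permAlgEquiv (e : Equiv.Perm (Fin n)) :
    AddMonoidAlgebra ℂ (Fin n → ℤ) ≃ₐ[ℂ] AddMonoidAlgebra ℂ (Fin n → ℤ) :=
  AddMonoidAlgebra.domCongr ℂ ℂ (LinearEquiv.funCongrLeft ℤ ℤ e.symm).toAddEquiv

theorem permAlgEquiv_single (e : Equiv.Perm (Fin n)) (a : Fin n → ℤ) (r : ℂ) :
    permAlgEquiv e (AddMonoidAlgebra.single a r) = AddMonoidAlgebra.single (a ∘ e.symm) r :=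
  AddMonoidAlgebra.domCongr_single _ a r

theorem permAlgEquiv_one_add_EshC_mul_DltC (e : Equiv.Perm (Fin n)) (i j : Fin n) :
    permAlgEquiv e (1 + EshC j * DltC i) = 1 + EshC (e j) * DltC (e i) := by
  simp only [EshC, DltC, map_add, map_one, map_mul, map_sub, permAlgEquiv_single,
    Pi.single_comp_equiv, Equiv.symm_symm]

theorem rename_opApplyC (e : Equiv.Perm (Fin n)) (Q : AddMonoidAlgebra ℂ (Fin n → ℤ))
    (p : MvPolynomial (Fin n) ℂ) :
    rename e (opApplyC Q p) = opApplyC (permAlgEquiv e Q) (rename e p) := by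
  simp only [opApplyC_eq_opAlgHom]
  induction Q using AddMonoidAlgebra.induction_linear with
  | zero => simp
  | add Q Q' hQ hQ' => simp only [map_add, LinearMap.add_apply, hQ, hQ']
  | single a r =>
    simp only [opAlgHom, AddMonoidAlgebra.lift_single, permAlgEquiv_single, LinearMap.smul_apply,
      map_smul]
    exact congrArg (r • ·) (rename_shift e _ p)

end Permutations

section Adjacent

variable {n : ℕ}

theorem swap_lt_swap_of_lt {i j p q : Fin n} (hij : (i : ℕ) + 1 = j) (hpq : p < q)
    (hne : (p, q) ≠ (i, j)) : Equiv.swap i j p < Equiv.swap i j q := by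
  rw [Fin.lt_def] at hpq ⊢
  rw [Ne, Prod.mk.injEq, Fin.ext_iff, Fin.ext_iff] at hne
  simp only [Equiv.swap_apply_def]
  split_ifs <;> simp only [Fin.ext_iff] at * <;> omega

theorem swap_mem_pairs_erase {i j : Fin n} (hij : (i : ℕ) + 1 = j) {x : Fin n × Fin n}
    (hx : x ∈ (pairs n).erase (i, j)) :
    (Equiv.swap i j x.1, Equiv.swap i j x.2) ∈ (pairs n).erase (i, j) := by
  simp only [pairs, Finset.mem_erase, Finset.mem_filter, Finset.mem_univ, true_and, ne_eq,
    Prod.mk.injEq] at hx ⊢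
  refine ⟨fun ⟨hp, hq⟩ => ?_, swap_lt_swap_of_lt hij hx.2 hx.1⟩
  rw [Equiv.swap_apply_eq_iff, Equiv.swap_apply_left] at hp
  rw [Equiv.swap_apply_eq_iff, Equiv.swap_apply_right] at hq
  have := hx.2
  rw [hp, hq, Fin.lt_def] at this
  omega

theorem prod_pairs_erase_swap {M : Type*} [CommMonoid M] {i j : Fin n} (hij : (i : ℕ) + 1 = j)
    (f : Fin n → Fin n → M) :
    ∏ x ∈ (pairs n).erase (i, j), f (Equiv.swap i j x.1) (Equiv.swap i j x.2) =
      ∏ x ∈ (pairs n).erase (i, j), f x.1 x.2 :=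
  Finset.prod_equiv (Equiv.prodCongr (Equiv.swap i j) (Equiv.swap i j))
    (fun x => ⟨swap_mem_pairs_erase hij, fun hx => by
      simpa using swap_mem_pairs_erase hij hx⟩) fun _ _ => rfl

theorem rename_swap_opApplyC_prod_pairs_eq_neg_iff {i j : Fin n} (hij : (i : ℕ) + 1 = j)
    (A : MvPolynomial (Fin n) ℂ) :
    rename (Equiv.swap i j) (opApplyC (∏ p ∈ pairs n, (1 + EshC p.2 * DltC p.1)) A) =
        -opApplyC (∏ p ∈ pairs n, (1 + EshC p.2 * DltC p.1)) A ↔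
      rename (Equiv.swap i j) (opApplyC (1 + EshC j * DltC i) A) =
        -opApplyC (1 + EshC j * DltC i) A := by
  have hmem : (i, j) ∈ pairs n :=
    Finset.mem_filter.mpr ⟨Finset.mem_univ _, show i < j from Fin.lt_def.mpr (by omega)⟩
  set R := ∏ p ∈ (pairs n).erase (i, j), (1 + EshC p.2 * DltC p.1)
  have hprod : ∏ p ∈ pairs n, (1 + EshC p.2 * DltC p.1) = R * (1 + EshC j * DltC i) := by
    rw [mul_comm]
    exact (Finset.mul_prod_erase _ _ hmem).symm
  have hR : permAlgEquiv (Equiv.swap i j) R = R := by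
    simp only [R, map_prod, permAlgEquiv_one_add_EshC_mul_DltC]
    exact prod_pairs_erase_swap hij fun p q => 1 + EshC q * DltC p
  rw [hprod, opApplyC_mul, rename_opApplyC, hR, ← opApplyC_neg,
    (opApplyC_prod_injective _ Prod.fst Prod.snd).eq_iff]

end Adjacent

/-- `(id + E_{k_{i+1}} Δ_{k_i}) A` is antisymmetric in `k_i, k_{i+1}` for all `i` iff
`(∏_{1 ≤ p < q ≤ n} (id + E_{k_q} Δ_{k_p})) A` is antisymmetric in all variables. -/
theorem antisymmetric_iff (n : ℕ) (A : MvPolynomial (Fin n) ℂ) :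
    (∀ i j : Fin n, (i : ℕ) + 1 = (j : ℕ) →
      rename (Equiv.swap i j) (opApplyC (1 + EshC j * DltC i) A) =
        -(opApplyC (1 + EshC j * DltC i) A)) ↔
    (∀ i j : Fin n, i ≠ j →
      rename (Equiv.swap i j)
          (opApplyC (∏ p ∈ pairs n, (1 + EshC p.2 * DltC p.1)) A) =
        -(opApplyC (∏ p ∈ pairs n, (1 + EshC p.2 * DltC p.1)) A)) := by
  constructor
  · intro hadj i j hij
    have := rename_eq_sign_smul_of_rename_swap_eq_neg
      (fun i j h => (rename_swap_opApplyC_prod_pairs_eq_neg_iff h A).mpr (hadj i j h))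
      (Equiv.swap i j)
    rwa [Equiv.Perm.sign_swap hij, Units.val_neg, Units.val_one, neg_smul, one_smul] at this
  · intro hall i j hij
    exact (rename_swap_opApplyC_prod_pairs_eq_neg_iff hij A).mp
      (hall i j (Fin.ne_of_val_ne (by omega)))
end

section
/- For every n ≥ 1, the number of monotone triangles with n rows and bottom row (1, 2, …, n) equals the number of n × n alternating sign matrices. -/
open MvPolynomial Finset

/-- A monotone triangle with `n` rows, stored with 0-indexed rows: row `r` (for `r < n`)
has `r + 1` entries.  The monotone-triangle conditions correspond to
`a_{i,j} ≤ a_{i-1,j} ≤ a_{i,j+1}` and `a_{i,j} < a_{i,j+1}` for `1 ≤ j < i ≤ n` (1-indexed). -/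
def IsMonotoneTriangle {n : ℕ} (a : (i : Fin n) → Fin (i.1 + 1) → ℤ) : Prop :=
  ∀ (r c : ℕ) (hr : r < n) (h1 : 1 ≤ r) (hc : c < r),
    a ⟨r, hr⟩ ⟨c, by show c < r + 1; omega⟩ ≤
      a ⟨r - 1, by omega⟩ ⟨c, by show c < r - 1 + 1; omega⟩ ∧
    a ⟨r - 1, by omega⟩ ⟨c, by show c < r - 1 + 1; omega⟩ ≤
      a ⟨r, hr⟩ ⟨c + 1, by show c + 1 < r + 1; omega⟩ ∧
    a ⟨r, hr⟩ ⟨c, by show c < r + 1; omega⟩ < a ⟨r, hr⟩ ⟨c + 1, by show c + 1 < r + 1; omega⟩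

/-- The bottom row (row `n-1`, which has `n` entries) is `k`. -/
def HasBottomRow {n : ℕ} (a : (i : Fin n) → Fin (i.1 + 1) → ℤ) (k : Fin n → ℤ) : Prop :=
  ∀ j : Fin n, a ⟨n - 1, by have := j.isLt; omega⟩
    ⟨j.1, by show j.1 < n - 1 + 1; have := j.isLt; omega⟩ = k j

/-- The number of monotone triangles with `n` rows and bottom row `k`. -/
noncomputable def mtCount (n : ℕ) (k : Fin n → ℤ) : ℕ :=
  Nat.card {a : (i : Fin n) → Fin (i.1 + 1) → ℤ // IsMonotoneTriangle a ∧ HasBottomRow a k}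

/-- The nonzero entries of `v` alternate in sign: any two consecutive nonzero entries
(i.e. with only zeros strictly between them) have opposite signs. -/
def AltSign {n : ℕ} (v : Fin n → ℤ) : Prop :=
  ∀ a b : Fin n, a < b → v a ≠ 0 → v b ≠ 0 → (∀ c, a < c → c < b → v c = 0) → v a = -v b

/-- An `n × n` alternating sign matrix: entries in `{0, 1, -1}`, all row and column sums
equal to `1`, and the nonzero entries of every row and every column alternate in sign. -/
def IsASM {n : ℕ} (A : Matrix (Fin n) (Fin n) ℤ) : Prop :=
  (∀ i j, A i j = 0 ∨ A i j = 1 ∨ A i j = -1) ∧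
  (∀ i, ∑ j, A i j = 1) ∧ (∀ j, ∑ i, A i j = 1) ∧
  (∀ i, AltSign fun j => A i j) ∧ (∀ j, AltSign fun i => A i j)

open scoped Matrix

/-!
Row `i` of the monotone triangle attached to an ASM lists, shifted by one, the columns whose
partial column sum through row `i` is `1`. A vector with entries in `{0, ±1}` and sum `1`
alternates in sign iff all its prefix sums lie in `{0, 1}`. Hence the partial column sums of an
ASM form a `0/1` matrix with `i + 1` ones in row `i`, and the prefix sums of row `i` of the ASM are
the differences of the counting functions `x ↦ #{c | a i c ≤ x}` of rows `i` and `i - 1` of the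
triangle. Two increasing sequences interlace iff their counting functions differ by `0` or `1`
everywhere, which is exactly the monotone triangle condition.
-/

section PrefixSum

variable {n : ℕ} {M : Type*} [AddCommMonoid M]

def prefixSum (v : Fin n → M) (m : ℕ) : M :=
  ∑ i with i.1 < m, v i

@[simp]
lemma prefixSum_zero (v : Fin n → M) : prefixSum v 0 = 0 := by
  simp [prefixSum]

lemma prefixSum_succ (v : Fin n → M) {m : ℕ} (hm : m < n) :
    prefixSum v (m + 1) = prefixSum v m + v ⟨m, hm⟩ := by
  have : univ.filter (fun i : Fin n => i.1 < m + 1) =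
      insert ⟨m, hm⟩ (univ.filter fun i : Fin n => i.1 < m) := by
    ext i
    simp only [mem_filter, mem_univ, true_and, mem_insert, Fin.ext_iff]
    omega
  rw [prefixSum, this, sum_insert (by simp), add_comm, prefixSum]

lemma prefixSum_of_le (v : Fin n → M) {m : ℕ} (hm : n ≤ m) : prefixSum v m = ∑ i, v i := by
  rw [prefixSum, filter_true_of_mem fun i _ => by omega]

lemma prefixSum_eq_of_forall_eq_zero (v : Fin n → M) {m₁ m₂ : ℕ} (h : m₁ ≤ m₂)
    (hv : ∀ i : Fin n, m₁ ≤ i.1 → i.1 < m₂ → v i = 0) : prefixSum v m₂ = prefixSum v m₁ := by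
  refine (sum_subset (fun i => by simp only [mem_filter, mem_univ, true_and]; omega) ?_).symm
  intro i hi hi'
  simp only [mem_filter, mem_univ, true_and, not_lt] at hi hi'
  exact hv i hi' hi

lemma prefixSum_induction {v : Fin n → M} {p : M → Prop} (h0 : p 0)
    (hsucc : ∀ m, m < n → p (prefixSum v (m + 1))) (m : ℕ) : p (prefixSum v m) := by
  rcases m with _ | m
  · rwa [prefixSum_zero]
  rcases lt_or_ge m n with hm | hm
  · exact hsucc m hm
  rw [prefixSum_of_le v (by omega : n ≤ m + 1)]
  rcases n with _ | n
  · simpa using h0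
  · simpa [prefixSum_of_le v le_rfl] using hsucc n n.lt_succ_self

end PrefixSum

section AltSign

variable {n : ℕ}

lemma prefixSum_sub_eq_zero_or_eq_last {v : Fin n → ℤ} (hv : AltSign v) {a b : ℕ} (hab : a ≤ b) :
    prefixSum v b - prefixSum v a = 0 ∨
      ∃ p : Fin n, a ≤ p.1 ∧ p.1 < b ∧ v p ≠ 0 ∧ prefixSum v b - prefixSum v a = v p ∧
        ∀ c : Fin n, p < c → c.1 < b → v c = 0 := by
  induction b, hab using Nat.le_induction with
  | base => simp
  | succ b hab ih =>
    rcases lt_or_ge b n with hb | hb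
    swap
    · rw [prefixSum_of_le v (by omega : n ≤ b + 1), ← prefixSum_of_le v hb]
      refine ih.imp_right fun ⟨p, hap, hpb, hp, hsum, hzero⟩ =>
        ⟨p, hap, by omega, hp, hsum, fun c hpc _ => hzero c hpc (by omega)⟩
    rw [prefixSum_succ v hb]
    by_cases hvb : v ⟨b, hb⟩ = 0
    · rw [hvb, add_zero]
      refine ih.imp_right fun ⟨p, hap, hpb, hp, hsum, hzero⟩ =>
        ⟨p, hap, by omega, hp, hsum, fun c hpc hcb => ?_⟩
      rcases Nat.lt_succ_iff_lt_or_eq.mp hcb with hcb | hcb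
      · exact hzero c hpc hcb
      · rwa [show c = ⟨b, hb⟩ from Fin.ext hcb]
    obtain h0 | ⟨p, -, hpb, hp, hsum, hzero⟩ := ih
    · refine Or.inr ⟨⟨b, hb⟩, hab, b.lt_succ_self, hvb, by linarith, fun c hbc hcb => ?_⟩
      exact absurd hcb (by have : b < c.1 := hbc; omega)
    · have := hv p ⟨b, hb⟩ hpb hp hvb hzero
      omega

theorem altSign_iff_prefixSum (v : Fin n → ℤ) :
    ((∀ i, v i = 0 ∨ v i = 1 ∨ v i = -1) ∧ ∑ i, v i = 1 ∧ AltSign v) ↔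
      (∀ m, prefixSum v m = 0 ∨ prefixSum v m = 1) ∧ prefixSum v n = 1 := by
  have hentry : ∀ i : Fin n, v i = prefixSum v (i.1 + 1) - prefixSum v i.1 := fun i => by
    rw [prefixSum_succ v i.2]; ring
  constructor
  · rintro ⟨hv, hsum, halt⟩
    have hblock : ∀ a b, a ≤ b → -1 ≤ prefixSum v b - prefixSum v a ∧
        prefixSum v b - prefixSum v a ≤ 1 := fun a b hab => by
      rcases prefixSum_sub_eq_zero_or_eq_last halt hab with h | ⟨p, -, -, -, h, -⟩ <;>
        [omega; (rw [h]; rcases hv p with h' | h' | h' <;> omega)]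
    have htotal : prefixSum v n = 1 := by rw [prefixSum_of_le v le_rfl, hsum]
    refine ⟨fun m => ?_, htotal⟩
    rcases le_or_gt m n with hm | hm
    -- both the prefix sum and the complementary suffix sum lie in `{-1, 0, 1}`
    · have hprefix := hblock 0 m (Nat.zero_le m)
      have hsuffix := hblock m n hm
      rw [prefixSum_zero] at hprefix
      omega
    · rw [prefixSum_of_le v hm.le, hsum]; simp
  · rintro ⟨h01, htotal⟩
    refine ⟨fun i => ?_, by rwa [← prefixSum_of_le v le_rfl], ?_⟩
    · rw [hentry i]
      rcases h01 (i.1 + 1) with h | h <;> rcases h01 i.1 with h' | h' <;> omega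
    · intro a b hab ha hb hzero
      rw [Fin.lt_def] at hab
      have hgap : prefixSum v b.1 = prefixSum v (a.1 + 1) :=
        prefixSum_eq_of_forall_eq_zero v hab fun c h1 h2 => hzero c (by rw [Fin.lt_def]; omega) h2
      rw [hentry a] at ha ⊢
      rw [hentry b, hgap] at hb ⊢
      rcases h01 (a.1 + 1) with h | h <;> rcases h01 a.1 with h' | h' <;>
        rcases h01 (b.1 + 1) with h'' | h'' <;> omega

theorem isASM_iff_prefixSum (A : Matrix (Fin n) (Fin n) ℤ) :
    IsASM A ↔
      ((∀ i m, prefixSum (A i) m = 0 ∨ prefixSum (A i) m = 1) ∧ ∀ i, prefixSum (A i) n = 1) ∧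
      ((∀ j m, prefixSum (Aᵀ j) m = 0 ∨ prefixSum (Aᵀ j) m = 1) ∧ ∀ j, prefixSum (Aᵀ j) n = 1) := by
  have hrow := fun i => altSign_iff_prefixSum (A i)
  have hcol := fun j => altSign_iff_prefixSum (Aᵀ j)
  simp only [Matrix.transpose_apply] at hcol
  constructor
  · rintro ⟨h01, hr, hc, hra, hca⟩
    have hR := fun i => (hrow i).mp ⟨h01 i, hr i, hra i⟩
    have hC := fun j => (hcol j).mp ⟨fun i => h01 i j, hc j, hca j⟩
    exact ⟨⟨fun i => (hR i).1, fun i => (hR i).2⟩, fun j => (hC j).1, fun j => (hC j).2⟩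
  · rintro ⟨⟨hr, hrt⟩, hc, hct⟩
    have hR := fun i => (hrow i).mpr ⟨hr i, hrt i⟩
    have hC := fun j => (hcol j).mpr ⟨hc j, hct j⟩
    exact ⟨fun i j => (hR i).1 j, fun i => (hR i).2.1, fun j => (hC j).2.1,
      fun i => (hR i).2.2, fun j => (hC j).2.2⟩

end AltSign

section Interlace

variable {α : Type*} [LinearOrder α] {k : ℕ}

lemma StrictMono.lt_card_filter_le_iff {s : Fin k → α} (hs : StrictMono s) (x : α) (c : Fin k) :
    c.1 < #{d | s d ≤ x} ↔ s c ≤ x := by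
  constructor
  · intro hc
    by_contra! hx
    have : #{d | s d ≤ x} ≤ #(Iio c) := card_le_card fun d hd => by
      simp only [mem_filter, mem_univ, true_and] at hd
      exact mem_Iio.mpr (hs.lt_iff_lt.mp (hd.trans_lt hx))
    rw [Fin.card_Iio] at this
    omega
  · intro hx
    have : #(Iic c) ≤ #{d | s d ≤ x} := card_le_card fun d hd => by
      simp only [mem_filter, mem_univ, true_and]
      exact (hs.monotone (mem_Iic.mp hd)).trans hx
    rw [Fin.card_Iic] at this
    omega

theorem interlace_iff_card_filter_le {s : Fin k → α} {t : Fin (k + 1) → α} (hs : StrictMono s)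
    (ht : StrictMono t) :
    (∀ c : Fin k, t c.castSucc ≤ s c ∧ s c ≤ t c.succ) ↔
      ∀ x, #{c | s c ≤ x} ≤ #{c | t c ≤ x} ∧ #{c | t c ≤ x} ≤ #{c | s c ≤ x} + 1 := by
  constructor
  · intro h x
    have hs_le : #{c | s c ≤ x} ≤ k := (card_filter_le _ _).trans_eq (card_fin k)
    have ht_le : #{c | t c ≤ x} ≤ k + 1 := (card_filter_le _ _).trans_eq (card_fin _)
    constructor
    · by_contra! hlt
      let c : Fin k := ⟨#{c | t c ≤ x}, by omega⟩
      have := (ht.lt_card_filter_le_iff x c.castSucc).mpr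
        ((h c).1.trans ((hs.lt_card_filter_le_iff x c).mp hlt))
      exact this.false
    · by_contra! hlt
      let c : Fin k := ⟨#{c | s c ≤ x}, by omega⟩
      have := (hs.lt_card_filter_le_iff x c).mpr
        ((h c).2.trans ((ht.lt_card_filter_le_iff x c.succ).mp (by simp [c]; omega)))
      exact this.false
  · intro h c
    constructor
    · exact (ht.lt_card_filter_le_iff _ c.castSucc).mp
        (lt_of_lt_of_le ((hs.lt_card_filter_le_iff _ c).mpr le_rfl) (h (s c)).1)
    · refine (hs.lt_card_filter_le_iff _ c).mp ?_
      have := (ht.lt_card_filter_le_iff (t c.succ) c.succ).mpr le_rfl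
      have := (h (t c.succ)).2
      simp only [Fin.val_succ] at *
      omega

end Interlace

section RowDiff

variable {n : ℕ} {ι G : Type*} [AddCommGroup G]

def colPartialSum (A : Matrix (Fin n) ι G) : Matrix (Fin n) ι G :=
  fun i j => prefixSum (Aᵀ j) (i.1 + 1)

def rowDiff (B : Matrix (Fin n) ι G) : Matrix (Fin n) ι G :=
  fun i j => B i j - if h : 0 < i.1 then B ⟨i.1 - 1, by omega⟩ j else 0

lemma prefixSum_rowDiff_col (B : Matrix (Fin n) ι G) (j : ι) {m : ℕ} (hm : m < n) :
    prefixSum ((rowDiff B)ᵀ j) (m + 1) = B ⟨m, hm⟩ j := by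
  induction m with
  | zero => simp [prefixSum_succ _ hm, rowDiff]
  | succ m ih =>
    rw [prefixSum_succ _ hm, ih (by omega)]
    simp [rowDiff]

lemma colPartialSum_rowDiff (B : Matrix (Fin n) ι G) : colPartialSum (rowDiff B) = B :=
  funext fun i => funext fun j => prefixSum_rowDiff_col B j i.2

lemma rowDiff_colPartialSum (A : Matrix (Fin n) ι G) : rowDiff (colPartialSum A) = A := by
  ext i j
  simp only [rowDiff, colPartialSum, prefixSum_succ _ i.2]
  split_ifs with hi
  · rw [show i.1 - 1 + 1 = i.1 by omega]
    abel
  · have hi0 : i = ⟨0, i.pos⟩ := by ext; simp only; omega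
    simp [hi0]

lemma prefixSum_rowDiff_row {k : ℕ} (B : Matrix (Fin n) (Fin k) G) (i : Fin n) (m : ℕ) :
    prefixSum (rowDiff B i) m =
      prefixSum (B i) m - if h : 0 < i.1 then prefixSum (B ⟨i.1 - 1, by omega⟩) m else 0 := by
  simp only [prefixSum, rowDiff, sum_sub_distrib]
  split_ifs <;> simp

end RowDiff

lemma sum_eq_card_filter_eq_one {ι R : Type*} [Fintype ι] [AddCommMonoidWithOne R]
    [DecidableEq R] {v : ι → R} (hv : ∀ j, v j = 0 ∨ v j = 1) : ∑ j, v j = #{j | v j = 1} := by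
  rw [card_filter, Nat.cast_sum]
  refine sum_congr rfl fun j _ => ?_
  rcases hv j with h | h <;> simp [h]

abbrev Triangle (n : ℕ) : Type := (i : Fin n) → Fin (i.1 + 1) → ℤ

namespace Triangle

variable {n : ℕ} {a : Triangle n}

-- Columns are numbered from `0` and triangle entries from `1`, hence the shift `j + 1`.
def indicator (a : Triangle n) : Matrix (Fin n) (Fin n) ℤ :=
  fun i j => if ∃ c, a i c = j + 1 then 1 else 0

lemma indicator_eq_zero_or_one (a : Triangle n) (i j : Fin n) :
    a.indicator i j = 0 ∨ a.indicator i j = 1 := by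
  unfold indicator
  split_ifs <;> simp

lemma prefixSum_indicator {i : Fin n} (hinj : Function.Injective (a i))
    (hbd : ∀ c, 1 ≤ a i c ∧ a i c ≤ n) (m : ℕ) :
    prefixSum (a.indicator i) m = #{c | a i c ≤ m} := by
  unfold prefixSum indicator
  rw [sum_boole, filter_filter, Nat.cast_inj]
  refine (card_nbij (fun c => ⟨(a i c).toNat - 1, by have := hbd c; omega⟩) ?_ ?_ ?_).symm
  · intro c hc
    simp only [coe_filter, mem_univ, true_and, Set.mem_ofPred_eq] at hc ⊢
    have := hbd c
    exact ⟨by omega, c, by omega⟩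
  · intro c _ d _ h
    have := hbd c
    have := hbd d
    exact hinj (by simp only [Fin.mk.injEq] at h; omega)
  · intro j hj
    simp only [coe_filter, mem_univ, true_and, Set.mem_ofPred_eq] at hj
    obtain ⟨hjm, c, hc⟩ := hj
    exact ⟨c, by simp only [coe_filter, mem_univ, true_and, Set.mem_ofPred_eq]; omega,
      Fin.ext (by simp only; omega)⟩

noncomputable def ofIndicator (B : Matrix (Fin n) (Fin n) ℤ)
    (hB : ∀ i : Fin n, #{j | B i j = 1} = i.1 + 1) : Triangle n :=
  fun i c => ((({j | B i j = 1} : Finset (Fin n)).orderEmbOfFin (hB i) c : ℕ) : ℤ) + 1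

section OfIndicator

variable {B : Matrix (Fin n) (Fin n) ℤ} (hB : ∀ i : Fin n, #{j | B i j = 1} = i.1 + 1)
include hB

lemma strictMono_ofIndicator (i : Fin n) : StrictMono (ofIndicator B hB i) := fun c d h => by
  have := ({j | B i j = 1} : Finset (Fin n)).orderEmbOfFin (hB i) |>.strictMono h
  simp only [ofIndicator, add_lt_add_iff_right, Nat.cast_lt]
  exact this

lemma ofIndicator_mem_Icc (i : Fin n) (c : Fin (i.1 + 1)) :
    1 ≤ ofIndicator B hB i c ∧ ofIndicator B hB i c ≤ n := by
  have := (({j | B i j = 1} : Finset (Fin n)).orderEmbOfFin (hB i) c).2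
  simp only [ofIndicator]
  omega

lemma indicator_ofIndicator (h01 : ∀ i j, B i j = 0 ∨ B i j = 1) :
    (ofIndicator B hB).indicator = B := by
  ext i j
  have hrange := congrArg (j ∈ ·) (range_orderEmbOfFin ({j | B i j = 1} : Finset (Fin n)) (hB i))
  simp only [Set.mem_range, coe_filter, mem_univ, true_and, Set.mem_ofPred_eq] at hrange
  simp only [indicator, ofIndicator, add_left_inj, Nat.cast_inj, ← Fin.ext_iff, hrange]
  rcases h01 i j with h | h <;> simp [h]

lemma hasBottomRow_ofIndicator (hlast : ∀ i j : Fin n, i.1 + 1 = n → B i j = 1) :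
    HasBottomRow (ofIndicator B hB) fun j => (j : ℤ) + 1 := by
  intro j
  have hn : n - 1 + 1 = n := by have := j.pos; omega
  have huniv : ({j' | B ⟨n - 1, by omega⟩ j' = 1} : Finset (Fin n)) = univ :=
    filter_true_of_mem fun j' _ => hlast _ j' hn
  have hid := orderEmbOfFin_unique (hB ⟨n - 1, by omega⟩) (f := fun c => Fin.cast hn c)
    (fun c => by rw [huniv]; exact mem_univ _) (Fin.cast_strictMono hn)
  simp only [ofIndicator, ← hid, Fin.val_cast]

end OfIndicator

lemma ofIndicator_indicator (hrow : ∀ i, StrictMono (a i)) (hbd : ∀ i c, 1 ≤ a i c ∧ a i c ≤ n)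
    {B : Matrix (Fin n) (Fin n) ℤ} (hBa : B = a.indicator)
    (hB : ∀ i : Fin n, #{j | B i j = 1} = i.1 + 1) : ofIndicator B hB = a := by
  subst hBa
  funext i c
  have hemb : (fun c => (⟨(a i c).toNat - 1, by have := hbd i c; omega⟩ : Fin n)) =
      ({j | a.indicator i j = 1} : Finset (Fin n)).orderEmbOfFin (hB i) := by
    refine orderEmbOfFin_unique _ (fun c => ?_) fun c d h => ?_
    · simp only [mem_filter, mem_univ, true_and, indicator, ite_eq_left_iff, zero_ne_one,
        imp_false, not_not]
      exact ⟨c, by have := hbd i c; omega⟩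
    · have := hrow i h
      have := hbd i c
      have := hbd i d
      simp only [Fin.mk_lt_mk]
      omega
  simp only [ofIndicator, ← hemb]
  have := hbd i c
  omega

end Triangle

section MonotoneTriangle

open Triangle

variable {n : ℕ} {a : Triangle n}

lemma isMonotoneTriangle_iff :
    IsMonotoneTriangle a ↔ (∀ i, StrictMono (a i)) ∧
      ∀ (r : ℕ) (hr : r + 1 < n) (c : Fin (r + 1)),
        a ⟨r + 1, hr⟩ c.castSucc ≤ a ⟨r, by omega⟩ c ∧
          a ⟨r, by omega⟩ c ≤ a ⟨r + 1, hr⟩ c.succ := by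
  constructor
  · intro ht
    refine ⟨fun i => Fin.strictMono_iff_lt_succ.mpr fun c => ?_, fun r hr c => ?_⟩
    · exact (ht i.1 c.1 i.2 (Nat.one_le_of_lt c.2) c.2).2.2
    · exact ⟨(ht (r + 1) c hr (by omega) c.2).1, (ht (r + 1) c hr (by omega) c.2).2.1⟩
  · rintro ⟨hrow, hint⟩ r c hr h1 hc
    obtain ⟨q, rfl⟩ : ∃ q, r = q + 1 := ⟨r - 1, by omega⟩
    exact ⟨(hint q hr ⟨c, hc⟩).1, (hint q hr ⟨c, hc⟩).2, hrow _ (Nat.lt_succ_self c)⟩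

lemma IsMonotoneTriangle.strictMono (ht : IsMonotoneTriangle a) (i : Fin n) : StrictMono (a i) :=
  (isMonotoneTriangle_iff.mp ht).1 i

lemma isMonotoneTriangle_iff_card (hrow : ∀ i, StrictMono (a i)) :
    IsMonotoneTriangle a ↔ ∀ (r : ℕ) (hr : r + 1 < n) (x : ℤ),
      #{c | a ⟨r, by omega⟩ c ≤ x} ≤ #{c | a ⟨r + 1, hr⟩ c ≤ x} ∧
        #{c | a ⟨r + 1, hr⟩ c ≤ x} ≤ #{c | a ⟨r, by omega⟩ c ≤ x} + 1 := by
  rw [isMonotoneTriangle_iff, and_iff_right hrow]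
  exact forall_congr' fun r => forall_congr' fun hr =>
    interlace_iff_card_filter_le (hrow _) (hrow _)

lemma IsMonotoneTriangle.mem_Icc (ht : IsMonotoneTriangle a)
    (hb : HasBottomRow a fun j => (j : ℤ) + 1) (i : Fin n) (c : Fin (i.1 + 1)) :
    1 ≤ a i c ∧ a i c ≤ n := by
  have hint := (isMonotoneTriangle_iff.mp ht).2
  -- interlacing squeezes row `i` between two diagonals of the bottom row `(1, …, n)`
  suffices h : ∀ d (i : Fin n) (c : Fin (i.1 + 1)), i.1 + d + 1 = n →
      c.1 + 1 ≤ a i c ∧ a i c ≤ c.1 + 1 + d by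
    have := h (n - 1 - i.1) i c (by omega)
    omega
  intro d
  induction d with
  | zero =>
    rintro ⟨i, hi'⟩ c hi
    obtain rfl : i = n - 1 := by simp only at hi; omega
    have h : a ⟨n - 1, hi'⟩ c = c.1 + 1 := hb ⟨c.1, by omega⟩
    omega
  | succ d ih =>
    intro i c hi
    have h : a ⟨i.1 + 1, by omega⟩ c.castSucc ≤ a i c ∧ a i c ≤ a ⟨i.1 + 1, by omega⟩ c.succ :=
      hint i.1 (by omega) c
    have h1 := ih ⟨i.1 + 1, by omega⟩ c.castSucc (by simp only; omega)
    have h2 := ih ⟨i.1 + 1, by omega⟩ c.succ (by simp only; omega)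
    simp only [Fin.val_castSucc, Fin.val_succ] at h1 h2
    omega

section RowSums

variable (hrow : ∀ i, StrictMono (a i)) (hbd : ∀ i c, 1 ≤ a i c ∧ a i c ≤ n)
include hrow hbd

lemma prefixSum_rowDiff_indicator_zero (h0 : 0 < n) (m : ℕ) :
    prefixSum (rowDiff a.indicator ⟨0, h0⟩) m = #{c | a ⟨0, h0⟩ c ≤ m} := by
  rw [prefixSum_rowDiff_row, dif_neg (lt_irrefl 0), sub_zero,
    prefixSum_indicator (hrow _).injective (hbd _)]

lemma prefixSum_rowDiff_indicator_succ {r : ℕ} (hr : r + 1 < n) (m : ℕ) :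
    prefixSum (rowDiff a.indicator ⟨r + 1, hr⟩) m =
      #{c | a ⟨r + 1, hr⟩ c ≤ m} - #{c | a ⟨r, by omega⟩ c ≤ m} := by
  rw [prefixSum_rowDiff_row, dif_pos r.succ_pos, prefixSum_indicator (hrow _).injective (hbd _),
    prefixSum_indicator (hrow _).injective (hbd _)]
  rfl

end RowSums

theorem isASM_rowDiff_indicator (ht : IsMonotoneTriangle a)
    (hb : HasBottomRow a fun j => (j : ℤ) + 1) : IsASM (rowDiff a.indicator) := by
  have hrow := ht.strictMono
  have hbd := ht.mem_Icc hb
  have hcount := (isMonotoneTriangle_iff_card hrow).mp ht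
  have hfull (i : Fin n) : #{c | a i c ≤ ((n : ℕ) : ℤ)} = i.1 + 1 := by
    rw [filter_true_of_mem fun c _ => (hbd i c).2, card_univ, Fintype.card_fin]
  refine (isASM_iff_prefixSum _).mpr ⟨⟨fun i m => ?_, fun i => ?_⟩, fun j m => ?_, fun j => ?_⟩
  · obtain ⟨_ | r, hr⟩ := i
    · have : #{c | a ⟨0, hr⟩ c ≤ (m : ℤ)} ≤ 1 := (card_le_univ _).trans_eq (Fintype.card_fin _)
      rw [prefixSum_rowDiff_indicator_zero hrow hbd]
      omega
    · have := hcount r hr m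
      rw [prefixSum_rowDiff_indicator_succ hrow hbd]
      omega
  · obtain ⟨_ | r, hr⟩ := i
    · rw [prefixSum_rowDiff_indicator_zero hrow hbd, hfull]
      simp
    · rw [prefixSum_rowDiff_indicator_succ hrow hbd, hfull, hfull]
      push_cast
      ring
  · refine prefixSum_induction (p := fun s : ℤ => s = 0 ∨ s = 1) (Or.inl rfl) (fun k hk => ?_) m
    rw [prefixSum_rowDiff_col _ j hk]
    exact a.indicator_eq_zero_or_one _ j
  · have hlast := prefixSum_rowDiff_col a.indicator j (m := n - 1) (by have := j.pos; omega)
    rw [Nat.sub_add_cancel j.pos] at hlast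
    rw [hlast, Triangle.indicator, if_pos ⟨⟨j.1, by show j.1 < n - 1 + 1; omega⟩, hb j⟩]

theorem isMonotoneTriangle_of_isASM_rowDiff_indicator (hrow : ∀ i, StrictMono (a i))
    (hbd : ∀ i c, 1 ≤ a i c ∧ a i c ≤ n) (hA : IsASM (rowDiff a.indicator)) :
    IsMonotoneTriangle a := by
  have hsum := ((isASM_iff_prefixSum _).mp hA).1.1
  refine (isMonotoneTriangle_iff_card hrow).mpr fun r hr x => ?_
  rcases le_or_gt 0 x with hx | hx
  · lift x to ℕ using hx
    have := hsum ⟨r + 1, hr⟩ x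
    rw [prefixSum_rowDiff_indicator_succ hrow hbd] at this
    omega
  · have hempty (i : Fin n) : #{c | a i c ≤ x} = 0 := by
      refine card_eq_zero.mpr (filter_eq_empty_iff.mpr fun c _ => ?_)
      have := hbd i c
      omega
    rw [hempty, hempty]
    simp

end MonotoneTriangle

section ASM

open Triangle

variable {n : ℕ} {A : Matrix (Fin n) (Fin n) ℤ} (hA : IsASM A)
include hA

lemma colPartialSum_eq_zero_or_one (i j : Fin n) :
    colPartialSum A i j = 0 ∨ colPartialSum A i j = 1 :=
  ((isASM_iff_prefixSum A).mp hA).2.1 j _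

lemma card_filter_colPartialSum_eq_one (i : Fin n) : #{j | colPartialSum A i j = 1} = i.1 + 1 := by
  have hsum : ∑ j, colPartialSum A i j = i.1 + 1 := by
    simp only [colPartialSum, prefixSum, Matrix.transpose_apply]
    rw [sum_comm]
    simp only [hA.2.1, sum_const, nsmul_eq_mul, mul_one, Fin.card_filter_val_lt]
    push_cast
    omega
  rw [sum_eq_card_filter_eq_one (colPartialSum_eq_zero_or_one hA i)] at hsum
  exact_mod_cast hsum

lemma rowDiff_indicator_ofIndicator_colPartialSum :
    rowDiff (ofIndicator _ (card_filter_colPartialSum_eq_one hA)).indicator = A := by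
  rw [indicator_ofIndicator _ (colPartialSum_eq_zero_or_one hA), rowDiff_colPartialSum]

lemma isMonotoneTriangle_ofIndicator_colPartialSum :
    IsMonotoneTriangle (ofIndicator _ (card_filter_colPartialSum_eq_one hA)) :=
  isMonotoneTriangle_of_isASM_rowDiff_indicator (strictMono_ofIndicator _)
    (ofIndicator_mem_Icc _) (by rw [rowDiff_indicator_ofIndicator_colPartialSum hA]; exact hA)

lemma hasBottomRow_ofIndicator_colPartialSum :
    HasBottomRow (ofIndicator _ (card_filter_colPartialSum_eq_one hA)) fun j => (j : ℤ) + 1 :=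
  hasBottomRow_ofIndicator _ fun i j hi => by
    rw [colPartialSum, hi]
    exact ((isASM_iff_prefixSum A).mp hA).2.2 j

end ASM

noncomputable def monotoneTriangleEquivASM (n : ℕ) :
    {a : Triangle n // IsMonotoneTriangle a ∧ HasBottomRow a fun j => (j : ℤ) + 1} ≃
      {A : Matrix (Fin n) (Fin n) ℤ // IsASM A} where
  toFun a := ⟨rowDiff a.1.indicator, isASM_rowDiff_indicator a.2.1 a.2.2⟩
  invFun A := ⟨_, isMonotoneTriangle_ofIndicator_colPartialSum A.2,
    hasBottomRow_ofIndicator_colPartialSum A.2⟩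
  left_inv a := Subtype.ext <| Triangle.ofIndicator_indicator a.2.1.strictMono
    (a.2.1.mem_Icc a.2.2) (colPartialSum_rowDiff _) _
  right_inv A := Subtype.ext <| rowDiff_indicator_ofIndicator_colPartialSum A.2

theorem monotone_triangles_eq_asm_general (n : ℕ) :
    mtCount n (fun j => (j : ℤ) + 1) =
      Nat.card {A : Matrix (Fin n) (Fin n) ℤ // IsASM A} :=
  Nat.card_congr (monotoneTriangleEquivASM n)

/-- Monotone triangles with bottom row `(1, 2, …, n)` are equinumerous with `n × n`
alternating sign matrices. -/
theorem monotone_triangles_eq_asm (n : ℕ) (hn : 1 ≤ n) :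
    mtCount n (fun j => (j : ℤ) + 1) =
      Nat.card {A : Matrix (Fin n) (Fin n) ℤ // IsASM A} :=
  monotone_triangles_eq_asm_general n
end
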